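/- arXiv:0811.2383 — 7 statements merged into one kernel-verified Lean document; each statement's English description precedes it below -/
import Mathlib

section
/- Let G be a torsion-free commutative transitive group, let Z be an infinite cyclic subgroup of G, and let A = C_G(Z) be the centralizer of Z. Then Z is contained in A, A is contained in the commensurator Comm_G(Z), and Comm_G(Z) is contained in the normalizer N_G(A) of A. -/
/-!
In a commutative transitive group, an abelian subgroup `H` has the same centralizer as each of
its nontrivial elements. If `g` commensurates an infinite `H`, then `gHg⁻¹ ∩ H` has finite index
in `H`, so it contains a nontrivial element `gzg⁻¹` with `z ∈ H`; conjugating by `g` turns the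
centralizer of `z`, which is that of `H`, into the centralizer of `gzg⁻¹`, which is again that
of `H`.
-/

/-- A monoid is torsion-free if no nontrivial element has finite order. -/
def Monoid.IsTorsionFree (G : Type*) [Monoid G] : Prop :=
  ∀ g : G, g ≠ 1 → ¬IsOfFinOrder g

def Group.IsCommTransitive (G : Type*) [Group G] : Prop :=
  ∀ a b c : G, a ≠ 1 → b ≠ 1 → c ≠ 1 → Commute a b → Commute b c → Commute a c

namespace Subgroup

variable {G : Type*} [Group G]

theorem normalizer_le_commensurator (H : Subgroup G) :
    normalizer (H : Set G) ≤ Commensurable.commensurator H := fun g hg => by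
  rw [Commensurable.commensurator_mem_iff, conjAct_pointwise_smul_eq_self hg]

theorem inf_ne_bot_of_relIndex_ne_zero {H K : Subgroup G} [Infinite K] (h : H.relIndex K ≠ 0) :
    H ⊓ K ≠ ⊥ := by
  intro hbot
  rw [← inf_relIndex_right, hbot, relIndex_bot_left, Nat.card_eq_zero_of_infinite] at h
  exact h rfl

theorem exists_conj_mem_of_mem_commensurator {H : Subgroup G} [Infinite H] {g : G}
    (hg : g ∈ Commensurable.commensurator H) : ∃ z ∈ H, z ≠ 1 ∧ g * z * g⁻¹ ∈ H := by
  rw [Commensurable.commensurator_mem_iff] at hg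
  obtain ⟨w, hw, hw1⟩ :=
    (bot_or_exists_ne_one _).resolve_left (inf_ne_bot_of_relIndex_ne_zero hg.1)
  obtain ⟨hw_conj, hwH⟩ := mem_inf.mp hw
  obtain ⟨z, hzH, rfl⟩ := (mem_smul_pointwise_iff_exists _ _ _).mp hw_conj
  rw [ConjAct.toConjAct_smul] at hw1 hwH
  exact ⟨z, hzH, fun hz1 => hw1 (conj_eq_one_iff.mpr hz1), hwH⟩

end Subgroup

namespace Group.IsCommTransitive

open Subgroup

variable {G : Type*} [Group G]

theorem mem_centralizer_iff_commute (hG : Group.IsCommTransitive G) {H : Subgroup G}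
    [IsMulCommutative H] {w : G} (hwH : w ∈ H) (hw1 : w ≠ 1) (x : G) : x ∈ centralizer (H : Set G) ↔ Commute w x := by
  refine ⟨fun hx => mem_centralizer_iff.mp hx w hwH, fun hwx => mem_centralizer_iff.mpr ?_⟩
  intro z hzH
  rcases eq_or_ne z 1 with rfl | hz1
  · simp
  rcases eq_or_ne x 1 with rfl | hx1
  · simp
  exact hG z w x hz1 hw1 hx1 (setLike_mul_comm hzH hwH) hwx

theorem mem_normalizer_centralizer_of_conj_mem (hG : Group.IsCommTransitive G)
    {H : Subgroup G} [IsMulCommutative H] {g z : G} (hzH : z ∈ H) (hz1 : z ≠ 1) (hgz : g * z * g⁻¹ ∈ H) :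
    g ∈ normalizer (centralizer (H : Set G) : Set G) := by
  have hgz1 : g * z * g⁻¹ ≠ 1 := fun h => hz1 (conj_eq_one_iff.mp h)
  refine mem_normalizer_iff.mpr fun x => ?_
  rw [hG.mem_centralizer_iff_commute hzH hz1, hG.mem_centralizer_iff_commute hgz hgz1,
    Commute.conj_iff]

end Group.IsCommTransitive

theorem cyclic_centralizer_commensurator_normalizer_general {G : Type*} [Group G]
    (hCT : ∀ a b c : G, a ≠ 1 → b ≠ 1 → c ≠ 1 → Commute a b → Commute b c → Commute a c)
    (Z : Subgroup G) (hZcyc : IsCyclic ↥Z) (hZinf : Infinite ↥Z) :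
    Z ≤ Subgroup.centralizer (Z : Set G) ∧
    Subgroup.centralizer (Z : Set G) ≤ Subgroup.Commensurable.commensurator Z ∧
    Subgroup.Commensurable.commensurator Z ≤ Subgroup.normalizer ((Subgroup.centralizer (Z : Set G) : Subgroup G) : Set G) := by
  refine ⟨Subgroup.le_centralizer Z,
    (Subgroup.centralizer_le_normalizer _).trans Z.normalizer_le_commensurator, ?_⟩
  intro g hg
  obtain ⟨z, hzZ, hz1, hgz⟩ := Subgroup.exists_conj_mem_of_mem_commensurator hg
  exact Group.IsCommTransitive.mem_normalizer_centralizer_of_conj_mem hCT hzZ hz1 hgz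

/-- In a torsion-free commutative transitive group, for an infinite cyclic
subgroup Z with centralizer A one has Z ≤ A ≤ Comm_G(Z) ≤ N_G(A). -/
theorem cyclic_centralizer_commensurator_normalizer {G : Type*} [Group G]
    (htf : Monoid.IsTorsionFree G)
    (hCT : ∀ a b c : G, a ≠ 1 → b ≠ 1 → c ≠ 1 → Commute a b → Commute b c → Commute a c)
    (Z : Subgroup G) (hZcyc : IsCyclic ↥Z) (hZinf : Infinite ↥Z) :
    Z ≤ Subgroup.centralizer (Z : Set G) ∧
    Subgroup.centralizer (Z : Set G) ≤ Subgroup.Commensurable.commensurator Z ∧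
    Subgroup.Commensurable.commensurator Z ≤ Subgroup.normalizer ((Subgroup.centralizer (Z : Set G) : Subgroup G) : Set G) :=
  cyclic_centralizer_commensurator_normalizer_general hCT Z hZcyc hZinf
end

section
/- Let a group G act on a set E with finitely many orbits, and let ≈ be a G-invariant equivalence relation on E (meaning that e ≈ e' implies g·e ≈ g·e' for all g ∈ G). Let Y be an equivalence class of ≈ and let H = {g ∈ G : g·Y = Y} be its setwise stabilizer. Then the induced action of H on Y has finitely many orbits. -/
open Pointwise

/-!
A class of a `G`-invariant equivalence relation is a block: any `g` moving one point of the class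
into the class fixes it setwise. Hence, choosing in each of the finitely many `G`-orbits that meet
the class one point of the class, every other point of the class is reached from it by an element
of the stabilizer.
-/

namespace MulAction

variable {G X : Type*} [Group G] [MulAction G X]

theorem isBlock_setOf_rel {r : X → X → Prop} (hr : Equivalence r)
    (hinv : ∀ (g : G) (x x' : X), r x x' → r (g • x) (g • x')) (e : X) :
    IsBlock G {x | r x e} := by
  refine isBlock_iff_smul_eq_of_mem.mpr fun g a ha hga ↦ ?_
  have rel_congr_right {x y z : X} (h : r y z) : r x y ↔ r x z :=
    ⟨(hr.trans · h), (hr.trans · (hr.symm h))⟩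
  have rel_inv_smul_iff (x : X) : r (g⁻¹ • x) a ↔ r x (g • a) :=
    ⟨fun h ↦ by simpa using hinv g _ _ h, fun h ↦ by simpa using hinv g⁻¹ _ _ h⟩
  ext x
  simp only [Set.mem_smul_set_iff_inv_smul_mem, Set.mem_ofPred_eq]
  rw [← rel_congr_right ha, rel_inv_smul_iff, rel_congr_right hga]

theorem IsBlock.exists_finset_stabilizer_orbit_reps {B : Set X} (hB : IsBlock G B)
    (horb : ∃ s : Finset X, ∀ x : X, ∃ g : G, ∃ a ∈ s, g • a = x) :
    ∃ t : Finset X, ↑t ⊆ B ∧ ∀ y ∈ B, ∃ g ∈ stabilizer G B, ∃ b ∈ t, g • b = y := by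
  classical
  obtain ⟨s, hs⟩ := horb
  have hrep (a : X) : ∃ g : G, (∃ h : G, h • a ∈ B) → g • a ∈ B :=
    (em (∃ h : G, h • a ∈ B)).elim (fun ⟨h, hh⟩ ↦ ⟨h, fun _ ↦ hh⟩) fun hn ↦ ⟨1, hn.elim⟩
  choose rep hrep using hrep
  refine ⟨(s.image fun a ↦ rep a • a).filter (· ∈ B), fun b hb ↦ (Finset.mem_filter.mp hb).2,
    fun y hy ↦ ?_⟩
  obtain ⟨h, a, ha, rfl⟩ := hs y
  have hrep_mem : rep a • a ∈ B := hrep a ⟨h, hy⟩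
  have hmove : (h * (rep a)⁻¹) • rep a • a = h • a := by rw [smul_smul, inv_mul_cancel_right]
  refine ⟨h * (rep a)⁻¹, hB.smul_eq_of_mem hrep_mem (hmove ▸ hy), rep a • a,
    Finset.mem_filter.mpr ⟨Finset.mem_image_of_mem _ ha, hrep_mem⟩, hmove⟩

end MulAction

/-- If G acts on E with finitely many orbits and ≈ is a G-invariant
equivalence relation on E, then the setwise stabilizer H of an equivalence class Y
acts on Y with finitely many orbits. -/
theorem stabilizer_of_class_finitely_many_orbits {G E : Type*} [Group G] [MulAction G E]
    (horb : ∃ s : Finset E, ∀ e : E, ∃ g : G, ∃ x ∈ s, g • x = e)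
    (r : E → E → Prop) (hr : Equivalence r)
    (hinv : ∀ (g : G) (e e' : E), r e e' → r (g • e) (g • e'))
    (Y : Set E) (e₀ : E) (hY : Y = {x | r x e₀}) :
    ∃ s : Finset E, ↑s ⊆ Y ∧
      ∀ y ∈ Y, ∃ g ∈ MulAction.stabilizer G Y, ∃ x ∈ s, g • x = y := by
  subst hY
  exact (MulAction.isBlock_setOf_rel hr hinv e₀).exists_finset_stabilizer_orbit_reps horb
end

section
/- Let a group G act on a tree T such that the stabilizer of every edge of T is two-ended. Let A and B be commensurable two-ended subgroups of G fixing vertices a and b respectively. Then for every edge e lying on the path [a,b], the stabilizer G_e is commensurable with A (and hence also with B). In other words, commensurability on two-ended subgroups satisfies the third axiom of admissibility. -/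
/-- The stabilizer of the edge (u,v): elements fixing both endpoints. -/
noncomputable def edgeStab (G : Type*) [Group G] {V : Type*} [MulAction G V] (u v : V) :
    Subgroup G :=
  MulAction.stabilizer G u ⊓ MulAction.stabilizer G v

/-- A group is two-ended if it is infinite and has an infinite cyclic subgroup of
finite index. -/
def IsTwoEndedGroup (H : Type*) [Group H] : Prop :=
  Infinite H ∧ ∃ Z : Subgroup H, IsCyclic ↥Z ∧ Infinite ↥Z ∧ Z.FiniteIndex

/-!
Every element of `A ⊓ B` fixes `a` and `b`, hence, paths in a tree being unique, every vertex of
`[a, b]`; so `A ⊓ B ≤ G_e` for each edge `e` of `[a, b]`. As `A ⊓ B` has finite index in the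
infinite group `A`, it is infinite, and an infinite subgroup of a two-ended group has finite index
(it meets the cyclic finite-index subgroup in a nontrivial, hence finite-index, subgroup).
So `G_e` and `A` are both commensurable with `A ⊓ B`.
-/

theorem SimpleGraph.IsAcyclic.map_eq_self_of_mem_support {V : Type*} {T : SimpleGraph V}
    (hT : T.IsAcyclic) {f : T →g T} (hf : Function.Injective f) {a b : V} (ha : f a = a)
    (hb : f b = b) {p : T.Walk a b} (hp : p.IsPath) {x : V} (hx : x ∈ p.support) : f x = x := by
  have hmap : (p.map f).copy ha hb = p := congrArg Subtype.val <|
    (hT.subsingleton_path a b).elim ⟨_, (Walk.isPath_copy _ ha hb).mpr (hp.map hf)⟩ ⟨p, hp⟩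
  have hsupp : p.support.map f = p.support.map id := by
    simpa using congrArg Walk.support hmap
  exact List.map_eq_map_iff.mp hsupp x hx

namespace Subgroup

variable {G : Type*} [Group G]

theorem finiteIndex_of_zpow_mem {g : G} (hg : zpowers g = ⊤) {S : Subgroup G} {n : ℤ}
    (hn : n ≠ 0) (hgn : g ^ n ∈ S) : S.FiniteIndex := by
  let r : Set.Ico (0 : ℤ) n.natAbs → G ⧸ S := fun k => (g ^ (k : ℤ) : G)
  have hr : Function.Surjective r := by
    rintro ⟨x⟩
    obtain ⟨m, rfl⟩ := mem_zpowers_iff.mp (hg ▸ mem_top x)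
    refine ⟨⟨m % n, Int.emod_nonneg m hn, Int.emod_lt m hn⟩, QuotientGroup.eq.mpr ?_⟩
    have : (g ^ (m % n))⁻¹ * g ^ m = (g ^ n) ^ (m / n) := by
      rw [← zpow_neg, ← zpow_add, ← zpow_mul, Int.emod_def]; ring_nf
    exact this ▸ zpow_mem hgn _
  have : Finite (G ⧸ S) := Finite.of_surjective r hr
  exact finiteIndex_of_finite_quotient

theorem _root_.IsCyclic.finiteIndex_of_infinite [IsCyclic G] (S : Subgroup G) [Infinite S] :
    S.FiniteIndex := by
  obtain ⟨g, hg⟩ := isCyclic_iff_exists_zpowers_eq_top.mp ‹IsCyclic G›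
  obtain ⟨s, hs⟩ := exists_ne (1 : S)
  obtain ⟨n, hn⟩ := mem_zpowers_iff.mp (hg ▸ mem_top (s : G))
  refine finiteIndex_of_zpow_mem hg (n := n) ?_ (hn ▸ s.2)
  rintro rfl
  exact hs (Subtype.ext (by simpa using hn.symm))

theorem infinite_inf_of_relIndex_ne_zero {H K : Subgroup G} [Infinite K] (h : H.relIndex K ≠ 0) :
    Infinite ↥(H ⊓ K) := by
  have hcard : Nat.card ↥(H ⊓ K) = 0 := by
    simpa [h, relIndex_bot_left] using relIndex_inf_mul_relIndex ⊥ H K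
  exact (Nat.card_eq_zero.mp hcard).resolve_left (not_isEmpty_of_nonempty _)

theorem infinite_subgroupOf_of_le {N M : Subgroup G} [Infinite N] (hNM : N ≤ M) :
    Infinite (N.subgroupOf M) :=
  (subgroupOfEquivOfLe hNM).toEquiv.infinite_iff.mpr ‹_›

theorem finiteIndex_of_infinite_of_isCyclic (Z : Subgroup G) [IsCyclic Z] [Z.FiniteIndex]
    (K : Subgroup G) [Infinite K] : K.FiniteIndex := by
  have : Infinite ↥(Z ⊓ K) := infinite_inf_of_relIndex_ne_zero
    (isFiniteRelIndex_of_finiteIndex (K := K)).relIndex_ne_zero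
  have := infinite_subgroupOf_of_le (inf_le_left : Z ⊓ K ≤ Z)
  have hZK : (Z ⊓ K).relIndex Z ≠ 0 := (IsCyclic.finiteIndex_of_infinite _).index_ne_zero
  have hZ : Z.relIndex ⊤ ≠ 0 := by rw [relIndex_top_right]; exact FiniteIndex.index_ne_zero
  have : (Z ⊓ K).FiniteIndex := ⟨by simpa using relIndex_ne_zero_trans hZK hZ⟩
  exact finiteIndex_of_le (inf_le_right : Z ⊓ K ≤ K)

theorem commensurable_of_le {H K : Subgroup G} (hHK : H ≤ K) (h : H.relIndex K ≠ 0) :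
    Commensurable H K :=
  ⟨h, by simp [relIndex_eq_one.mpr hHK]⟩

end Subgroup

theorem IsTwoEndedGroup.relIndex_ne_zero {G : Type*} [Group G] {N M : Subgroup G} [Infinite N]
    (hM : IsTwoEndedGroup M) (hNM : N ≤ M) : N.relIndex M ≠ 0 := by
  obtain ⟨-, Z, hZ, -, hZM⟩ := hM
  have := Subgroup.infinite_subgroupOf_of_le hNM
  exact (Z.finiteIndex_of_infinite_of_isCyclic _).index_ne_zero

theorem le_edgeStab_of_mem_edges {G V : Type*} [Group G] [MulAction G V] {T : SimpleGraph V}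
    (hT : T.IsAcyclic) (hact : ∀ (g : G) (u v : V), T.Adj u v → T.Adj (g • u) (g • v))
    {a b : V} {p : T.Walk a b} (hp : p.IsPath) {u v : V} (he : s(u, v) ∈ p.edges) :
    MulAction.stabilizer G a ⊓ MulAction.stabilizer G b ≤ edgeStab G u v := by
  rintro g ⟨ha, hb⟩
  let f : T →g T := ⟨(g • ·), hact g _ _⟩
  have hfix {x : V} (hx : x ∈ p.support) : g • x = x :=
    hT.map_eq_self_of_mem_support (f := f) (MulAction.injective g) ha hb hp hx
  exact ⟨hfix (p.fst_mem_support_of_mem_edges he), hfix (p.snd_mem_support_of_mem_edges he)⟩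

theorem commensurability_axiom3_general {G V : Type*} [Group G] [MulAction G V]
    (T : SimpleGraph V) (hT : T.IsTree)
    (hact : ∀ (g : G) (u v : V), T.Adj u v → T.Adj (g • u) (g • v))
    (hstab : ∀ u v : V, T.Adj u v → IsTwoEndedGroup ↥(edgeStab G u v))
    (A B : Subgroup G) (hA2 : IsTwoEndedGroup ↥A)
    (hcomm : Subgroup.Commensurable A B)
    (a b : V) (hAfix : ∀ g ∈ A, g • a = a) (hBfix : ∀ g ∈ B, g • b = b) :
    ∀ (p : T.Walk a b), p.IsPath → ∀ u v : V, s(u, v) ∈ p.edges →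
      Subgroup.Commensurable (edgeStab G u v) A ∧ Subgroup.Commensurable (edgeStab G u v) B := by
  intro p hp u v he
  have : Infinite A := hA2.1
  have : Infinite ↥(B ⊓ A) := Subgroup.infinite_inf_of_relIndex_ne_zero hcomm.2
  have hle : B ⊓ A ≤ edgeStab G u v := fun g hg =>
    le_edgeStab_of_mem_edges hT.isAcyclic hact hp he ⟨hAfix g hg.2, hBfix g hg.1⟩
  have hcommA : (B ⊓ A).Commensurable A := Subgroup.commensurable_of_le inf_le_right
    (by simpa [Subgroup.inf_relIndex_right] using hcomm.2)
  have hcommE : (B ⊓ A).Commensurable (edgeStab G u v) := Subgroup.commensurable_of_le hle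
    ((hstab u v (p.adj_of_mem_edges he)).relIndex_ne_zero hle)
  have hEA := hcommE.symm.trans hcommA
  exact ⟨hEA, hEA.trans hcomm⟩

/-- If a group acts (without inversions) on a tree with two-ended edge
stabilizers, and A, B are commensurable two-ended subgroups fixing vertices a, b, then
the stabilizer of every edge on [a,b] is commensurable to A and to B (axiom 3 of
admissibility for commensurability). -/
theorem commensurability_axiom3 {G V : Type*} [Group G] [MulAction G V]
    (T : SimpleGraph V) (hT : T.IsTree)
    (hact : ∀ (g : G) (u v : V), T.Adj u v → T.Adj (g • u) (g • v))
    (hni : ∀ (g : G) (u v : V), T.Adj u v → ¬(g • u = v ∧ g • v = u))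
    (hstab : ∀ u v : V, T.Adj u v → IsTwoEndedGroup ↥(edgeStab G u v))
    (A B : Subgroup G) (hA2 : IsTwoEndedGroup ↥A) (hB2 : IsTwoEndedGroup ↥B)
    (hcomm : Subgroup.Commensurable A B)
    (a b : V) (hAfix : ∀ g ∈ A, g • a = a) (hBfix : ∀ g ∈ B, g • b = b) :
    ∀ (p : T.Walk a b), p.IsPath → ∀ u v : V, s(u, v) ∈ p.edges →
      Subgroup.Commensurable (edgeStab G u v) A ∧ Subgroup.Commensurable (edgeStab G u v) B :=
  commensurability_axiom3_general T hT hact hstab A B hA2 hcomm a b hAfix hBfix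
end

section
/- Let a group G act on a tree T, and let A and B be subgroups of G each of which fixes a vertex of T. If the subgroup generated by A and B is abelian, then the subgroup generated by A and B fixes a vertex of T. -/
/-!
The vertices fixed by `A` form a nonempty subtree `S`; let `p` be a vertex of `S` nearest to `b`.
It is the only one: the geodesic from `b` to `p` meets `S` only in `p`, so continuing it by the
path inside `S` to another nearest vertex `q` gives the path from `b` to `q`, which is then too
long. Every `h ∈ B` commutes with `A`, hence maps `S` to itself, and fixes `b`, hence does not
increase distances to `b`; so `h • p` is again a nearest vertex of `S`, that is, `h • p = p`.
-/

namespace SimpleGraph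

variable {V : Type*} {T : SimpleGraph V}

/-- In a tree these are exactly the vertex sets of subtrees. -/
def PathConvex (T : SimpleGraph V) (S : Set V) : Prop :=
  ∀ ⦃x y : V⦄, x ∈ S → y ∈ S → ∀ p : T.Walk x y, p.IsPath → ∀ v ∈ p.support, v ∈ S

lemma Walk.IsPath.append_of_forall_mem_support {u v w : V} {p : T.Walk u v} {q : T.Walk v w}
    (hp : p.IsPath) (hq : q.IsPath) (hpq : ∀ x ∈ p.support, x ∈ q.support → x = v) :
    (p.append q).IsPath := by
  rw [Walk.isPath_def, Walk.support_append, List.nodup_append]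
  have hq' := hq.support_nodup
  rw [← q.cons_tail_support, List.nodup_cons] at hq'
  refine ⟨hp.support_nodup, hq'.2, ?_⟩
  rintro x hx _ hy rfl
  exact hq'.1 (hpq x hx (List.mem_of_mem_tail hy) ▸ hy)

lemma Walk.dist_lt_of_mem_support {b u v : V} (p : T.Walk b u) (hp : p.length = T.dist b u)
    (hv : v ∈ p.support) (hvu : v ≠ u) : T.dist b v < T.dist b u := by
  classical
  calc T.dist b v ≤ (p.takeUntil v hv).length := dist_le _
    _ < p.length := p.length_takeUntil_lt_length hv hvu
    _ = T.dist b u := hp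

lemma Reachable.dist_map_le {V' : Type*} {T' : SimpleGraph V'} (f : T →g T') {u v : V}
    (h : T.Reachable u v) : T'.dist (f u) (f v) ≤ T.dist u v := by
  obtain ⟨p, -, hp⟩ := h.exists_path_of_dist
  calc T'.dist (f u) (f v) ≤ (p.map f).length := dist_le _
    _ = T.dist u v := (p.length_map f).trans hp

lemma IsAcyclic.pathConvex_fixedPoints (hT : T.IsAcyclic) (f : T →g T)
    (hf : Function.Injective f) : T.PathConvex (Function.fixedPoints f) := by
  intro x y hx hy p hp
  have hfp : ((p.map f).copy hx hy).IsPath := (Walk.isPath_copy _ _ _).mpr (hp.map hf)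
  have heq : (p.map f).copy hx hy = p :=
    congrArg Subtype.val ((hT.subsingleton_path x y).elim ⟨_, hfp⟩ ⟨p, hp⟩)
  have hsupp : p.support.map f = p.support := by
    rw [← Walk.support_map, ← Walk.support_copy (p.map f) hx hy, heq]
  exact List.map_eq_map_iff.mp (hsupp.trans (List.map_id _).symm)

lemma PathConvex.eq_of_isMinOn_dist (hT : T.IsTree) {S : Set V} (hS : T.PathConvex S)
    {b p q : V} (hp : p ∈ S) (hmin : IsMinOn (T.dist b) S p) (hq : q ∈ S)
    (hqp : T.dist b q ≤ T.dist b p) : q = p := by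
  obtain ⟨w, hw, -⟩ := hT.existsUnique_path p q
  obtain ⟨P, hP, hPlen⟩ := (hT.connected b p).exists_path_of_dist
  obtain ⟨Q, hQ, hQlen⟩ := (hT.connected b q).exists_path_of_dist
  have hPw : (P.append w).IsPath := hP.append_of_forall_mem_support hw fun x hxP hxw => by
    by_contra hxp
    exact (P.dist_lt_of_mem_support hPlen hxP hxp).not_ge (hmin (hS hp hq w hw x hxw))
  have hPwQ : P.append w = Q :=
    congrArg Subtype.val ((hT.isAcyclic.subsingleton_path b q).elim ⟨_, hPw⟩ ⟨Q, hQ⟩)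
  have hlen := congrArg Walk.length hPwQ
  rw [Walk.length_append, hPlen, hQlen] at hlen
  exact (Walk.eq_of_length_eq_zero (p := w) (by omega)).symm

end SimpleGraph

open SimpleGraph

section TreeAction

variable {G V : Type*} [Group G] [MulAction G V] {T : SimpleGraph V}

def smulHom (hact : ∀ (g : G) (u v : V), T.Adj u v → T.Adj (g • u) (g • v)) (g : G) :
    T →g T :=
  ⟨(g • ·), hact g _ _⟩

lemma pathConvex_setOf_forall_smul_eq (hT : T.IsAcyclic)
    (hact : ∀ (g : G) (u v : V), T.Adj u v → T.Adj (g • u) (g • v)) (A : Set G) :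
    T.PathConvex {v | ∀ g ∈ A, g • v = v} :=
  fun _ _ hx hy p hp v hv g hg =>
    hT.pathConvex_fixedPoints (smulHom hact g) (MulAction.injective g) (hx g hg) (hy g hg) p hp v hv

end TreeAction

theorem abelian_join_of_elliptics_is_elliptic_general {G V : Type*} [Group G] [MulAction G V]
    (T : SimpleGraph V) (hT : T.IsTree)
    (hact : ∀ (g : G) (u v : V), T.Adj u v → T.Adj (g • u) (g • v))
    (A B : Subgroup G) (a b : V)
    (hA : ∀ g ∈ A, g • a = a) (hB : ∀ g ∈ B, g • b = b)
    (hab : IsMulCommutative (A ⊔ B : Subgroup G)) :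
    ∃ v : V, ∀ g ∈ A ⊔ B, g • v = v := by
  set S : Set V := {v | ∀ g ∈ (A : Set G), g • v = v}
  have hS : T.PathConvex S := pathConvex_setOf_forall_smul_eq hT.isAcyclic hact A
  obtain ⟨p, hpS, hmin⟩ : ∃ p ∈ S, IsMinOn (T.dist b) S p :=
    ⟨_, Function.argminOn_mem _ S ⟨a, hA⟩, fun _ hs => Function.argminOn_le (T.dist b) S hs⟩
  have hBp : ∀ h ∈ B, h • p = p := fun h hh => by
    have hhp : h • p ∈ S := fun g hg => by
      rw [smul_smul, ← setLike_mul_comm (s := A ⊔ B) (Subgroup.mem_sup_right hh)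
        (Subgroup.mem_sup_left hg), mul_smul, hpS g hg]
    refine hS.eq_of_isMinOn_dist hT hpS hmin hhp ?_
    calc T.dist b (h • p) = T.dist (h • b) (h • p) := by rw [hB h hh]
      _ ≤ T.dist b p := (hT.connected b p).dist_map_le (smulHom hact h)
  have hle : A ⊔ B ≤ MulAction.stabilizer G p := sup_le hpS hBp
  exact ⟨p, fun g hg => hle hg⟩

/-- If a group G acts (without inversions) on a tree and A, B are subgroups
each fixing a vertex, and ⟨A,B⟩ = A ⊔ B is abelian, then A ⊔ B fixes a vertex. -/
theorem abelian_join_of_elliptics_is_elliptic {G V : Type*} [Group G] [MulAction G V]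
    (T : SimpleGraph V) (hT : T.IsTree)
    (hact : ∀ (g : G) (u v : V), T.Adj u v → T.Adj (g • u) (g • v))
    (hni : ∀ (g : G) (u v : V), T.Adj u v → ¬(g • u = v ∧ g • v = u))
    (A B : Subgroup G) (a b : V)
    (hA : ∀ g ∈ A, g • a = a) (hB : ∀ g ∈ B, g • b = b)
    (hab : IsMulCommutative (A ⊔ B : Subgroup G)) :
    ∃ v : V, ∀ g ∈ A ⊔ B, g • v = v :=
  abelian_join_of_elliptics_is_elliptic_general T hT hact A B a b hA hB hab
end

section
/- Let a group G act on a tree T, let ℰ be a conjugation-invariant family of subgroups of G containing the stabilizer of every edge of T, and let ~ be an equivalence relation on ℰ satisfying: (1) if A ~ B and g ∈ G then g⁻¹Ag ~ g⁻¹Bg; (2) if A, B ∈ ℰ and A ≤ B then A ~ B; (3') if A ~ B and both A and B fix a vertex of T, then the subgroup generated by A and B fixes a vertex of T. Then axiom (3) holds: if A, B ∈ ℰ with A ~ B fix vertices a and b of T respectively, then for every edge e lying on the path [a,b] one has G_e ~ A (and G_e ~ B). -/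
/-!
By (3′) the subgroups `A` and `B` fix a common vertex `c`. In a tree the reduced path `[a,b]`
lies in `[a,c] ∪ [c,b]`, and an automorphism fixing both ends of a reduced path fixes it
pointwise, since it maps the path to a reduced path with the same ends. So each edge `e` of
`[a,b]` has `A ≤ G_e` or `B ≤ G_e`, and (2) together with `A ~ B` gives `G_e ~ A` and `G_e ~ B`.
-/

namespace SimpleGraph

variable {V : Type*} {T : SimpleGraph V}

theorem IsAcyclic.edges_subset_of_isPath (hT : T.IsAcyclic) {a b : V} {p : T.Walk a b}
    (hp : p.IsPath) (q : T.Walk a b) : p.edges ⊆ q.edges := by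
  classical
  have hpq : (q.toPath : T.Walk a b) = p :=
    congrArg Subtype.val ((hT.subsingleton_path a b).elim q.toPath ⟨p, hp⟩)
  exact hpq ▸ q.edges_toPath_subset_edges

theorem IsAcyclic.apply_eq_of_mem_support (hT : T.IsAcyclic) (f : T →g T)
    (hf : Function.Injective f) {a b : V} {p : T.Walk a b} (hp : p.IsPath) (ha : f a = a)
    (hb : f b = b) {x : V} (hx : x ∈ p.support) : f x = x := by
  have hmap : ((p.map f).copy ha hb).IsPath := by
    rw [Walk.isPath_copy]
    exact hp.map hf
  have hpath : (p.map f).copy ha hb = p :=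
    congrArg Subtype.val ((hT.subsingleton_path a b).elim ⟨_, hmap⟩ ⟨p, hp⟩)
  have hsupp : p.support.map f = p.support.map id := by
    conv_lhs => rw [← Walk.support_map, ← Walk.support_copy _ ha hb, hpath]
    rw [List.map_id]
  exact List.map_inj_left.mp hsupp x hx

theorem IsTree.exists_isPath_mem_edges_or (hT : T.IsTree) {a b : V} {p : T.Walk a b}
    (hp : p.IsPath) (c : V) {e : Sym2 V} (he : e ∈ p.edges) :
    (∃ q : T.Walk a c, q.IsPath ∧ e ∈ q.edges) ∨ (∃ q : T.Walk c b, q.IsPath ∧ e ∈ q.edges) := by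
  classical
  let q₁ := (hT.connected.preconnected a c).some.toPath
  let q₂ := (hT.connected.preconnected c b).some.toPath
  have he' := hT.isAcyclic.edges_subset_of_isPath hp ((q₁ : T.Walk a c).append q₂) he
  rw [Walk.edges_append, List.mem_append] at he'
  exact he'.imp (fun h => ⟨_, q₁.2, h⟩) (fun h => ⟨_, q₂.2, h⟩)

end SimpleGraph

theorem le_edgeStab_of_isPath {G V : Type*} [Group G] [MulAction G V] {T : SimpleGraph V}
    (hT : T.IsAcyclic) (hact : ∀ (g : G) (u v : V), T.Adj u v → T.Adj (g • u) (g • v))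
    {H : Subgroup G} {a c : V} (ha : ∀ g ∈ H, g • a = a) (hc : ∀ g ∈ H, g • c = c)
    {p : T.Walk a c} (hp : p.IsPath) {u v : V} (he : s(u, v) ∈ p.edges) :
    H ≤ edgeStab G u v := by
  intro g hg
  have hfix : ∀ x ∈ p.support, g • x = x := fun x hx =>
    hT.apply_eq_of_mem_support ⟨(g • ·), hact g _ _⟩ (MulAction.injective g) hp (ha g hg)
      (hc g hg) hx
  exact ⟨hfix u (p.fst_mem_support_of_mem_edges he), hfix v (p.snd_mem_support_of_mem_edges he)⟩

theorem admissibility_criterion_general {G V : Type*} [Group G] [MulAction G V]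
    (T : SimpleGraph V) (hT : T.IsTree)
    (hact : ∀ (g : G) (u v : V), T.Adj u v → T.Adj (g • u) (g • v))
    (ℰ : Set (Subgroup G))
    (hedge : ∀ u v : V, T.Adj u v → edgeStab G u v ∈ ℰ)
    (sim : Subgroup G → Subgroup G → Prop)
    (hsymm : ∀ A ∈ ℰ, ∀ B ∈ ℰ, sim A B → sim B A)
    (htrans : ∀ A ∈ ℰ, ∀ B ∈ ℰ, ∀ C ∈ ℰ, sim A B → sim B C → sim A C)
    (hax2 : ∀ A ∈ ℰ, ∀ B ∈ ℰ, A ≤ B → sim A B)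
    (hax3' : ∀ A ∈ ℰ, ∀ B ∈ ℰ, sim A B →
      ∀ a b : V, (∀ g ∈ A, g • a = a) → (∀ g ∈ B, g • b = b) →
        ∃ c : V, ∀ g ∈ A ⊔ B, g • c = c) :
    ∀ A ∈ ℰ, ∀ B ∈ ℰ, sim A B → ∀ a b : V,
      (∀ g ∈ A, g • a = a) → (∀ g ∈ B, g • b = b) →
      ∀ (p : T.Walk a b), p.IsPath → ∀ u v : V, s(u, v) ∈ p.edges →
        sim (edgeStab G u v) A ∧ sim (edgeStab G u v) B := by
  intro A hA B hB hAB a b ha hb p hp u v he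
  obtain ⟨c, hc⟩ := hax3' A hA B hB hAB a b ha hb
  have hE := hedge u v (p.adj_of_mem_edges he)
  rcases hT.exists_isPath_mem_edges_or hp c he with ⟨q, hq, hqe⟩ | ⟨q, hq, hqe⟩
  · have hEA : sim (edgeStab G u v) A := hsymm A hA _ hE <| hax2 A hA _ hE <|
      le_edgeStab_of_isPath hT.isAcyclic hact ha (fun g hg => hc g (Subgroup.mem_sup_left hg))
        hq hqe
    exact ⟨hEA, htrans _ hE A hA B hB hEA hAB⟩
  · have hEB : sim (edgeStab G u v) B := hsymm B hB _ hE <| hax2 B hB _ hE <|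
      le_edgeStab_of_isPath hT.isAcyclic hact (fun g hg => hc g (Subgroup.mem_sup_right hg)) hb
        hq hqe
    exact ⟨htrans _ hE B hB A hA hEB (hsymm A hA B hB hAB), hEB⟩

/-- Criterion for admissibility: if an equivalence relation ~ on a
conjugation-invariant family ℰ of subgroups (containing all edge stabilizers of the
tree T) satisfies axioms (1), (2) and (3'), then axiom (3) holds: whenever A ~ B fix
vertices a, b, every edge stabilizer along [a,b] is equivalent to A (and to B). -/
theorem admissibility_criterion {G V : Type*} [Group G] [MulAction G V]
    (T : SimpleGraph V) (hT : T.IsTree)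
    (hact : ∀ (g : G) (u v : V), T.Adj u v → T.Adj (g • u) (g • v))
    (hni : ∀ (g : G) (u v : V), T.Adj u v → ¬(g • u = v ∧ g • v = u))
    (ℰ : Set (Subgroup G))
    (hconj : ∀ A ∈ ℰ, ∀ g : G, Subgroup.map (MulAut.conj g).toMonoidHom A ∈ ℰ)
    (hedge : ∀ u v : V, T.Adj u v → edgeStab G u v ∈ ℰ)
    (sim : Subgroup G → Subgroup G → Prop)
    (hrefl : ∀ A ∈ ℰ, sim A A)
    (hsymm : ∀ A ∈ ℰ, ∀ B ∈ ℰ, sim A B → sim B A)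
    (htrans : ∀ A ∈ ℰ, ∀ B ∈ ℰ, ∀ C ∈ ℰ, sim A B → sim B C → sim A C)
    (hax1 : ∀ A ∈ ℰ, ∀ B ∈ ℰ, sim A B → ∀ g : G,
      sim (Subgroup.map (MulAut.conj g⁻¹).toMonoidHom A)
          (Subgroup.map (MulAut.conj g⁻¹).toMonoidHom B))
    (hax2 : ∀ A ∈ ℰ, ∀ B ∈ ℰ, A ≤ B → sim A B)
    (hax3' : ∀ A ∈ ℰ, ∀ B ∈ ℰ, sim A B →
      ∀ a b : V, (∀ g ∈ A, g • a = a) → (∀ g ∈ B, g • b = b) →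
        ∃ c : V, ∀ g ∈ A ⊔ B, g • c = c) :
    ∀ A ∈ ℰ, ∀ B ∈ ℰ, sim A B → ∀ a b : V,
      (∀ g ∈ A, g • a = a) → (∀ g ∈ B, g • b = b) →
      ∀ (p : T.Walk a b), p.IsPath → ∀ u v : V, s(u, v) ∈ p.edges →
        sim (edgeStab G u v) A ∧ sim (edgeStab G u v) B :=
  admissibility_criterion_general T hT hact ℰ hedge sim hsymm htrans hax2 hax3'
end

section
/- Let a group G act on a tree T, let k ≥ 1, and let ≈ be an equivalence relation on the edges of T such that: (i) if the stabilizers G_e and G_{e'} of two edges have infinite intersection, then e ≈ e'; and (ii) every reduced path in T all of whose edges lie in a single ≈-class has at most k edges. Then T is almost k-acylindrical: for every reduced path in T with more than k edges, the subgroup of G fixing that path pointwise is finite. -/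
/-!
A path longer than `k` cannot have all its edges in one `≈`-class, so it contains two edges
`e`, `e'` with `e ≉ e'`; by (i) the group `G_e ∩ G_{e'}` is finite, and it contains the
pointwise stabilizer of the path.
-/

/-- The stabilizer of an (unordered) edge: elements fixing both endpoints. -/
noncomputable def sym2Stab (G : Type*) [Group G] {V : Type*} [MulAction G V] :
    Sym2 V → Subgroup G :=
  Sym2.lift ⟨fun u v => MulAction.stabilizer G u ⊓ MulAction.stabilizer G v,
    fun _ _ => inf_comm _ _⟩

section

variable {G V : Type*} [Group G] [MulAction G V]

theorem mem_sym2Stab_mk {g : G} {u v : V} :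
    g ∈ sym2Stab G s(u, v) ↔ g • u = u ∧ g • v = v := by
  simp only [sym2Stab, Sym2.lift_mk, Subgroup.mem_inf, MulAction.mem_stabilizer_iff]

theorem SimpleGraph.Walk.mem_sym2Stab_of_forall_mem_support {T : SimpleGraph V} {a b : V}
    (p : T.Walk a b) {g : G} (hg : ∀ v ∈ p.support, g • v = v) {e : Sym2 V}
    (he : e ∈ p.edges) : g ∈ sym2Stab G e := by
  induction e using Sym2.ind with
  | _ u v =>
    exact mem_sym2Stab_mk.mpr
      ⟨hg u (p.fst_mem_support_of_mem_edges he), hg v (p.snd_mem_support_of_mem_edges he)⟩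

theorem SimpleGraph.Walk.finite_fixer_of_finite_sym2Stab_inf {T : SimpleGraph V} {a b : V}
    (p : T.Walk a b) {e e' : Sym2 V} (he : e ∈ p.edges) (he' : e' ∈ p.edges)
    (hfin : Finite ↥(sym2Stab G e ⊓ sym2Stab G e')) :
    Set.Finite {g : G | ∀ v ∈ p.support, g • v = v} :=
  (Set.toFinite ((sym2Stab G e ⊓ sym2Stab G e' : Subgroup G) : Set G)).subset
    fun _ hg => ⟨p.mem_sym2Stab_of_forall_mem_support hg he,
      p.mem_sym2Stab_of_forall_mem_support hg he'⟩

end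

theorem almost_k_acylindrical_general {G V : Type*} [Group G] [MulAction G V]
    (T : SimpleGraph V)
    (k : ℕ)
    (r : Sym2 V → Sym2 V → Prop)
    (hi : ∀ e ∈ T.edgeSet, ∀ e' ∈ T.edgeSet,
      Infinite ↥(sym2Stab G e ⊓ sym2Stab G e') → r e e')
    (hii : ∀ (a b : V) (p : T.Walk a b), p.IsPath →
      (∀ e ∈ p.edges, ∀ e' ∈ p.edges, r e e') → p.length ≤ k) :
    ∀ (a b : V) (p : T.Walk a b), p.IsPath → k < p.length →
      Set.Finite {g : G | ∀ v ∈ p.support, g • v = v} := by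
  intro a b p hp hlen
  obtain ⟨e, he, e', he', hnr⟩ : ∃ e ∈ p.edges, ∃ e' ∈ p.edges, ¬r e e' := by
    by_contra! hall
    exact (hii a b p hp hall).not_gt hlen
  refine p.finite_fixer_of_finite_sym2Stab_inf he he' ?_
  by_contra hinf
  exact hnr (hi e (p.edges_subset_edgeSet he) e' (p.edges_subset_edgeSet he')
    (not_finite_iff_infinite.mp hinf))

/-- Let G act (without inversions) on a tree T, let k ≥ 1, and let ≈ be an
equivalence relation on edges such that (i) edges whose stabilizers have infinite
intersection are equivalent, and (ii) every reduced path all of whose edges lie in one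
≈-class has at most k edges. Then T is almost k-acylindrical: the pointwise stabilizer
of any reduced path with more than k edges is finite. -/
theorem almost_k_acylindrical {G V : Type*} [Group G] [MulAction G V]
    (T : SimpleGraph V) (hT : T.IsTree)
    (hact : ∀ (g : G) (u v : V), T.Adj u v → T.Adj (g • u) (g • v))
    (hni : ∀ (g : G) (u v : V), T.Adj u v → ¬(g • u = v ∧ g • v = u))
    (k : ℕ) (hk : 1 ≤ k)
    (r : Sym2 V → Sym2 V → Prop) (hr : Equivalence r)
    (hi : ∀ e ∈ T.edgeSet, ∀ e' ∈ T.edgeSet,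
      Infinite ↥(sym2Stab G e ⊓ sym2Stab G e') → r e e')
    (hii : ∀ (a b : V) (p : T.Walk a b), p.IsPath →
      (∀ e ∈ p.edges, ∀ e' ∈ p.edges, r e e') → p.length ≤ k) :
    ∀ (a b : V) (p : T.Walk a b), p.IsPath → k < p.length →
      Set.Finite {g : G | ∀ v ∈ p.support, g • v = v} :=
  almost_k_acylindrical_general T k r hi hii
end

section
/- Let a group H act on a tree T fixing a vertex v, and let Y be a nonempty H-invariant subtree of T such that the action of H on the edge set of Y has finitely many orbits. Then Y has finite diameter (the distances between vertices of Y are bounded). -/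
/-!
Each `h : H` is an automorphism of `T` fixing `v₀`, so it preserves the distance to `v₀`.
Hence every vertex of `W` lying on an edge of `W` is within distance `N` of `v₀`, where `N`
bounds the distances to `v₀` of the endpoints of finitely many orbit representatives of edges.
As `W` is connected, every vertex of `W` lies on such an edge unless `W` is a single vertex,
so `W` lies in the ball of radius `N` about `v₀`, and in a tree every path is a geodesic.
-/

namespace SimpleGraph

variable {V : Type*} {G : SimpleGraph V}

lemma IsAcyclic.length_eq_dist_of_isPath (hG : G.IsAcyclic) {x y : V} {p : G.Walk x y}
    (hp : p.IsPath) : p.length = G.dist x y := by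
  obtain ⟨q, hq, hlen⟩ := p.reachable.exists_path_of_dist
  have hpq : p = q := congrArg Subtype.val ((hG.subsingleton_path x y).elim ⟨p, hp⟩ ⟨q, hq⟩)
  rw [hpq, hlen]

lemma Hom.dist_map_le {V' : Type*} {G' : SimpleGraph V'} (f : G →g G') {x y : V}
    (h : G.Reachable x y) : G'.dist (f x) (f y) ≤ G.dist x y := by
  obtain ⟨p, hp⟩ := h.exists_walk_length_eq_dist
  calc G'.dist (f x) (f y) ≤ (p.map f).length := dist_le _
    _ = G.dist x y := by rw [p.length_map, hp]

lemma Iso.dist_map {V' : Type*} {G' : SimpleGraph V'} (f : G ≃g G') (x y : V) :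
    G'.dist (f x) (f y) = G.dist x y := by
  by_cases h : G.Reachable x y
  · refine le_antisymm (f.toHom.dist_map_le h) ?_
    simpa using f.symm.toHom.dist_map_le (Iso.reachable_iff.mpr h : G'.Reachable (f x) (f y))
  · rw [dist_eq_zero_of_not_reachable h,
      dist_eq_zero_of_not_reachable (mt Iso.reachable_iff.mp h)]

variable {H : Type*} [Group H] [MulAction H V]

def smulIso (hact : ∀ (h : H) (u v : V), G.Adj u v → G.Adj (h • u) (h • v)) (h : H) :
    G ≃g G where
  toEquiv := MulAction.toPerm h
  map_rel_iff' := ⟨fun hadj => by simpa using hact h⁻¹ _ _ hadj, hact h _ _⟩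

lemma dist_smul (hact : ∀ (h : H) (u v : V), G.Adj u v → G.Adj (h • u) (h • v)) (h : H)
    (x y : V) : G.dist (h • x) (h • y) = G.dist x y :=
  (smulIso hact h).dist_map x y

lemma dist_smul_of_smul_eq (hact : ∀ (h : H) (u v : V), G.Adj u v → G.Adj (h • u) (h • v))
    {h : H} {v₀ : V} (hfix : h • v₀ = v₀) (x : V) : G.dist (h • x) v₀ = G.dist x v₀ := by
  conv_lhs => rw [← hfix]
  exact dist_smul hact h x v₀

lemma dist_le_sup_of_adj_of_mem
    (hact : ∀ (h : H) (u v : V), G.Adj u v → G.Adj (h • u) (h • v))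
    {v₀ : V} (hfix : ∀ h : H, h • v₀ = v₀) {W : Set V} {s : Finset (V × V)}
    (hs : ∀ u v : V, G.Adj u v → u ∈ W → v ∈ W →
      ∃ h : H, ∃ pq ∈ s, (h • pq.1 = u ∧ h • pq.2 = v) ∨ (h • pq.1 = v ∧ h • pq.2 = u))
    {u v : V} (hadj : G.Adj u v) (hu : u ∈ W) (hv : v ∈ W) :
    G.dist u v₀ ≤ s.sup fun pq => max (G.dist pq.1 v₀) (G.dist pq.2 v₀) := by
  obtain ⟨h, pq, hpq, ⟨rfl, -⟩ | ⟨-, rfl⟩⟩ := hs u v hadj hu hv <;>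
    rw [dist_smul_of_smul_eq hact (hfix h)] <;>
    refine Finset.le_sup_of_le hpq ?_
  exacts [le_max_left .., le_max_right ..]

end SimpleGraph

open SimpleGraph in
theorem invariant_subtree_bounded_general {H V : Type*} [Group H] [MulAction H V]
    (T : SimpleGraph V) (hT : T.IsTree)
    (hact : ∀ (h : H) (u v : V), T.Adj u v → T.Adj (h • u) (h • v))
    (v₀ : V) (hfix : ∀ h : H, h • v₀ = v₀)
    (W : Set V)
    (hWconn : ∀ x ∈ W, ∀ y ∈ W, ∃ p : T.Walk x y, ∀ z ∈ p.support, z ∈ W)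
    (horb : ∃ s : Finset (V × V),
      (∀ pq ∈ s, T.Adj pq.1 pq.2 ∧ pq.1 ∈ W ∧ pq.2 ∈ W) ∧
      ∀ u v : V, T.Adj u v → u ∈ W → v ∈ W →
        ∃ h : H, ∃ pq ∈ s, (h • pq.1 = u ∧ h • pq.2 = v) ∨
          (h • pq.1 = v ∧ h • pq.2 = u)) :
    ∃ n : ℕ, ∀ x ∈ W, ∀ y ∈ W, ∀ p : T.Walk x y, p.IsPath → p.length ≤ n := by
  obtain ⟨s, -, hs⟩ := horb
  set N := s.sup fun pq => max (T.dist pq.1 v₀) (T.dist pq.2 v₀)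
  have hnear : ∀ x ∈ W, ∀ y ∈ W, x ≠ y → T.dist x v₀ ≤ N := by
    intro x hx y hy hxy
    obtain ⟨p, hpW⟩ := hWconn x hx y hy
    exact dist_le_sup_of_adj_of_mem hact hfix hs (p.adj_snd (p.not_nil_of_ne hxy)) hx
      (hpW _ (p.getVert_mem_support 1))
  refine ⟨2 * N, fun x hx y hy p hp => ?_⟩
  rw [hT.isAcyclic.length_eq_dist_of_isPath hp]
  rcases eq_or_ne x y with rfl | hxy
  · simp
  calc T.dist x y ≤ T.dist x v₀ + T.dist v₀ y := hT.connected.dist_triangle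
    _ ≤ N + N := add_le_add (hnear x hx y hy hxy) (dist_comm ▸ hnear y hy x hx hxy.symm)
    _ = 2 * N := (two_mul N).symm

/-- If a group H acts (without inversions) on a tree T fixing a vertex v₀,
and Y is a nonempty H-invariant subtree on which H acts with finitely many orbits of
edges, then Y has finite diameter. -/
theorem invariant_subtree_bounded {H V : Type*} [Group H] [MulAction H V]
    (T : SimpleGraph V) (hT : T.IsTree)
    (hact : ∀ (h : H) (u v : V), T.Adj u v → T.Adj (h • u) (h • v))
    (hni : ∀ (h : H) (u v : V), T.Adj u v → ¬(h • u = v ∧ h • v = u))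
    (v₀ : V) (hfix : ∀ h : H, h • v₀ = v₀)
    (W : Set V) (hWne : W.Nonempty)
    (hWconn : ∀ x ∈ W, ∀ y ∈ W, ∃ p : T.Walk x y, ∀ z ∈ p.support, z ∈ W)
    (hWinv : ∀ (h : H), ∀ x ∈ W, h • x ∈ W)
    (horb : ∃ s : Finset (V × V),
      (∀ pq ∈ s, T.Adj pq.1 pq.2 ∧ pq.1 ∈ W ∧ pq.2 ∈ W) ∧
      ∀ u v : V, T.Adj u v → u ∈ W → v ∈ W →
        ∃ h : H, ∃ pq ∈ s, (h • pq.1 = u ∧ h • pq.2 = v) ∨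
          (h • pq.1 = v ∧ h • pq.2 = u)) :
    ∃ n : ℕ, ∀ x ∈ W, ∀ y ∈ W, ∀ p : T.Walk x y, p.IsPath → p.length ≤ n :=
  invariant_subtree_bounded_general T hT hact v₀ hfix W hWconn horb
end
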